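/- arXiv:1108.5395 — 6 statements merged into one kernel-verified Lean document; each statement's English description precedes it below -/
import Mathlib

section
/- Let N ∈ ℕ*, and let f : ℝ → ℝ be (2N+1)-times continuously differentiable with all derivatives f^{(q)}, 0 ≤ q ≤ 2N+1, in L¹(ℝ), with f even and f(ω) = O(ω^{2N}) as ω → 0 (so f^{(q)}(0) = 0 for 0 ≤ q ≤ 2N−1). Define h(τ) = −(1/π) ∫₀^∞ f(ω) sin(ωτ) dω. Then there exists C ≥ 0 such that |h(τ)| ≤ C / |τ|^{2N+1} for all τ ≠ 0; one may take C = (1/π)(∫₀^∞ |f^{(2N+1)}(ω)| dω + |f^{(2N)}(0)|). -/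
/-!
The sine integral is the imaginary part of the one-sided transform
`E g τ = ∫₀^∞ g(ω) e^{iωτ} dω`, and `|E g τ| ≤ ∫₀^∞ |g|`. Integrating by parts,
`E g = (i/τ) (g(0) + E g')`; the boundary term at infinity vanishes because an integrable function
with integrable derivative tends to `0`. Applying this `2N` times, where `f^{(q)}(0) = 0`, and once
more gives `E f = (i/τ)^{2N+1} (f^{(2N)}(0) + E f^{(2N+1)})`.
-/

open MeasureTheory Real Filter Topology Set Complex

noncomputable def oneSidedFourier (g : ℝ → ℝ) (τ : ℝ) : ℂ :=
  ∫ ω in Ioi 0, g ω * cexp (ω * τ * I)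

lemma norm_cexp_ofReal_mul_ofReal_mul_I (ω τ : ℝ) : ‖cexp (ω * τ * I)‖ = 1 := by
  rw [← ofReal_mul, norm_exp_ofReal_mul_I]

lemma hasDerivAt_cexp_mul_I_div (x : ℝ) {τ : ℝ} (hτ : τ ≠ 0) :
    HasDerivAt (fun ω : ℝ => cexp (ω * τ * I) / (τ * I)) (cexp (x * τ * I)) x := by
  have hτ' : (τ : ℂ) ≠ 0 := ofReal_ne_zero.mpr hτ
  have hexp := (((hasDerivAt_id (x : ℂ)).mul_const ((τ : ℂ) * I)).cexp.comp_ofReal).div_const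
    ((τ : ℂ) * I)
  refine (by simpa only [id, ← mul_assoc] using hexp : HasDerivAt _ _ x).congr_deriv ?_
  field_simp

lemma integrableOn_mul_cexp {g : ℝ → ℝ} {s : Set ℝ} (hg : IntegrableOn g s) (τ : ℝ) :
    IntegrableOn (fun ω : ℝ => g ω * cexp (ω * τ * I)) s :=
  hg.ofReal.mul_bdd (by fun_prop) (ae_of_all _ fun ω => (norm_cexp_ofReal_mul_ofReal_mul_I ω τ).le)

lemma norm_oneSidedFourier_le (g : ℝ → ℝ) (τ : ℝ) :
    ‖oneSidedFourier g τ‖ ≤ ∫ ω in Ioi 0, |g ω| :=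
  (norm_integral_le_integral_norm _).trans_eq <| by
    simp [norm_cexp_ofReal_mul_ofReal_mul_I]

lemma oneSidedFourier_eq_of_hasDerivAt {g g' : ℝ → ℝ} (hd : ∀ x ∈ Ici 0, HasDerivAt g (g' x) x)
    (hg : IntegrableOn g (Ioi 0)) (hg' : IntegrableOn g' (Ioi 0)) {τ : ℝ} (hτ : τ ≠ 0) :
    oneSidedFourier g τ = I / τ * (g 0 + oneSidedFourier g' τ) := by
  set v : ℝ → ℂ := fun ω => cexp (ω * τ * I) / (τ * I)
  have hlim : Tendsto g atTop (𝓝 0) :=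
    tendsto_zero_of_hasDerivAt_of_integrableOn_Ioi (fun x hx => hd x (mem_Ici_of_Ioi hx)) hg' hg
  have h_infty : Tendsto (fun ω => (g ω : ℂ) * v ω) atTop (𝓝 0) := by
    refine squeeze_zero_norm (a := fun ω => |g ω| / |τ|) (fun ω => ?_) ?_
    · simp [v, norm_cexp_ofReal_mul_ofReal_mul_I, div_eq_mul_inv]
    · simpa using hlim.abs.div_const |τ|
  have h_zero : Tendsto (fun ω => (g ω : ℂ) * v ω) (𝓝[>] 0) (𝓝 (g 0 * v 0)) := by
    refine (ContinuousAt.tendsto ?_).mono_left nhdsWithin_le_nhds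
    exact (hd 0 self_mem_Ici).continuousAt.ofReal.mul (by fun_prop : Continuous v).continuousAt
  have hg'v : IntegrableOn (fun ω => (g' ω : ℂ) * v ω) (Ioi 0) := by
    simp only [v, ← mul_div_assoc]
    exact (integrableOn_mul_cexp hg' τ).div_const _
  have hparts := integral_Ioi_mul_deriv_eq_deriv_mul (u := fun ω => (g ω : ℂ)) (v := v)
    (fun x hx => (hd x (mem_Ici_of_Ioi hx)).ofReal_comp) (fun x _ => hasDerivAt_cexp_mul_I_div x hτ)
    (integrableOn_mul_cexp hg τ) hg'v h_zero h_infty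
  have hτ' : (τ : ℂ) ≠ 0 := ofReal_ne_zero.mpr hτ
  simp only [v, ← mul_div_assoc, integral_div] at hparts
  rw [oneSidedFourier, hparts, oneSidedFourier]
  field_simp
  simp
  ring

lemma im_oneSidedFourier {g : ℝ → ℝ} (hg : IntegrableOn g (Ioi 0)) (τ : ℝ) :
    (oneSidedFourier g τ).im = ∫ ω in Ioi 0, g ω * Real.sin (ω * τ) := by
  have him := integral_im (integrableOn_mul_cexp hg τ)
  simp only [RCLike.im_to_complex] at him
  rw [oneSidedFourier, ← him]
  congr 1 with ω
  rw [← ofReal_mul, im_ofReal_mul, exp_ofReal_mul_I_im]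

lemma ContDiff.hasDerivAt_iteratedDeriv {f : ℝ → ℝ} {n : ℕ} (hf : ContDiff ℝ (n + 1) f) (x : ℝ) :
    HasDerivAt (iteratedDeriv n f) (iteratedDeriv (n + 1) f x) x := by
  rw [iteratedDeriv_succ]
  exact (hf.differentiable_iteratedDeriv n (by norm_cast; omega) x).hasDerivAt

lemma oneSidedFourier_eq_pow_mul_iteratedDeriv {f : ℝ → ℝ} {n : ℕ} (hf : ContDiff ℝ n f)
    (hint : ∀ q ≤ n, IntegrableOn (iteratedDeriv q f) (Ioi 0))
    (hvanish : ∀ q < n, iteratedDeriv q f 0 = 0) {τ : ℝ} (hτ : τ ≠ 0) :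
    oneSidedFourier f τ = (I / τ) ^ n * oneSidedFourier (iteratedDeriv n f) τ := by
  induction n with
  | zero => simp
  | succ n ih =>
    have hf' : ContDiff ℝ (n + 1) f := mod_cast hf
    rw [ih (hf'.of_le (by norm_cast; omega)) (fun q hq => hint q (by omega))
        (fun q hq => hvanish q (by omega)),
      oneSidedFourier_eq_of_hasDerivAt (fun x _ => hf'.hasDerivAt_iteratedDeriv x)
        (hint n (by omega)) (hint (n + 1) le_rfl) hτ, hvanish n (by omega)]
    simp only [ofReal_zero, zero_add, pow_succ, mul_assoc]

theorem sine_transform_decay_general (N : ℕ) (f : ℝ → ℝ)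
    (hf : ContDiff ℝ (2 * N + 1 : ℕ) f)
    (hint : ∀ q : ℕ, q ≤ 2 * N + 1 → Integrable (iteratedDeriv q f) (volume : Measure ℝ))
    (hvanish : ∀ q : ℕ, q ≤ 2 * N - 1 → iteratedDeriv q f 0 = 0)
    (h : ℝ → ℝ)
    (hh : ∀ τ : ℝ, h τ = -(1 / π) * ∫ ω in Set.Ioi (0 : ℝ), f ω * Real.sin (ω * τ)) :
    ∀ τ : ℝ, τ ≠ 0 →
      |h τ| ≤ ((1 / π) * ((∫ ω in Set.Ioi (0 : ℝ), |iteratedDeriv (2 * N + 1) f ω|) +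
        |iteratedDeriv (2 * N) f 0|)) / |τ| ^ (2 * N + 1) := by
  intro τ hτ
  have hint' (q : ℕ) (hq : q ≤ 2 * N + 1) := (hint q hq).integrableOn (s := Ioi 0)
  have hexpand : oneSidedFourier f τ = (I / τ) ^ (2 * N + 1) *
      (iteratedDeriv (2 * N) f 0 + oneSidedFourier (iteratedDeriv (2 * N + 1) f) τ) := by
    have hf' : ContDiff ℝ (2 * N + 1) f := mod_cast hf
    rw [oneSidedFourier_eq_pow_mul_iteratedDeriv (n := 2 * N) (hf'.of_le (by norm_cast; omega))
        (fun q hq => hint' q (by omega)) (fun q hq => hvanish q (by omega)) hτ,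
      oneSidedFourier_eq_of_hasDerivAt (fun x _ => hf'.hasDerivAt_iteratedDeriv x)
        (hint' (2 * N) (by omega)) (hint' _ le_rfl) hτ, pow_succ, mul_assoc]
  have hbound : ‖oneSidedFourier f τ‖ ≤ ((∫ ω in Ioi 0, |iteratedDeriv (2 * N + 1) f ω|) +
      |iteratedDeriv (2 * N) f 0|) / |τ| ^ (2 * N + 1) := by
    rw [hexpand, norm_mul, norm_pow, norm_div, norm_I, norm_real, Real.norm_eq_abs, div_pow,
      one_pow, one_div_mul_eq_div, add_comm (∫ _ in _, _)]
    gcongr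
    exact (norm_add_le _ _).trans (by
      rw [norm_real, Real.norm_eq_abs]; gcongr; exact norm_oneSidedFourier_le _ _)
  have hfint : IntegrableOn f (Ioi 0) := by simpa using hint' 0 (Nat.zero_le _)
  rw [hh, ← im_oneSidedFourier hfint, abs_mul, abs_neg, abs_of_pos (by positivity),
    mul_div_assoc]
  gcongr
  exact (abs_im_le_norm _).trans hbound

/-- Decay of the sine transform of a smooth even function vanishing to order
`2N` at the origin: `h(τ) = −(1/π) ∫₀^∞ f(ω) sin(ωτ) dω` satisfies
`|h(τ)| ≤ C/|τ|^{2N+1}` for `τ ≠ 0`, with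
`C = (1/π)(∫₀^∞ |f^{(2N+1)}| + |f^{(2N)}(0)|)`. -/
theorem sine_transform_decay (N : ℕ) (hN : 1 ≤ N) (f : ℝ → ℝ)
    (hf : ContDiff ℝ (2 * N + 1 : ℕ) f)
    (hint : ∀ q : ℕ, q ≤ 2 * N + 1 → Integrable (iteratedDeriv q f) (volume : Measure ℝ))
    (heven : ∀ ω : ℝ, f (-ω) = f ω)
    (hO : f =O[nhds (0 : ℝ)] fun ω => ω ^ (2 * N))
    (hvanish : ∀ q : ℕ, q ≤ 2 * N - 1 → iteratedDeriv q f 0 = 0)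
    (h : ℝ → ℝ)
    (hh : ∀ τ : ℝ, h τ = -(1 / π) * ∫ ω in Set.Ioi (0 : ℝ), f ω * Real.sin (ω * τ)) :
    ∀ τ : ℝ, τ ≠ 0 →
      |h τ| ≤ ((1 / π) * ((∫ ω in Set.Ioi (0 : ℝ), |iteratedDeriv (2 * N + 1) f ω|) +
        |iteratedDeriv (2 * N) f 0|)) / |τ| ^ (2 * N + 1) :=
  sine_transform_decay_general N f hf hint hvanish h hh
end

section
/- Let a₀ = (a₀[k])_{k∈ℤ} ∈ ℓ¹(ℤ) be a real sequence with frequency response A₀(ω) = Σ_k a₀[k] e^{−ikω}, and autocorrelation γ_{a₀}[k] = Σ_q a₀[q] a₀[q−k], so that |A₀(ω)|² = γ_{a₀}[0] + 2 Σ_{k≥1} γ_{a₀}[k] cos(kω). Let f ∈ L¹(ℝ) ∩ L∞(ℝ) and set g(τ) = −(1/π) ∫₀^∞ f(ω) sin(ωτ) dω and G(τ) = −(1/π) ∫₀^∞ |A₀(ω)|² f(ω) sin(2ωτ) dω. Then for all τ ∈ ℝ, G(τ) = γ_{a₀}[0] g(2τ) + Σ_{k≥1} γ_{a₀}[k] (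 g(2τ+k) + g(2τ−k) ). -/
open MeasureTheory Real

/-!
Expanding `|A₀(ω)|² = γ[0] + 2 Σ_{k≥1} γ[k] cos(kω)` and using
`2 cos(kω) sin(ωx) = sin(ω(x + k)) + sin(ω(x − k))`, the integrand of `G(τ)` becomes the series
`Σ_k γ[k] f(ω) s_k(ω)`, each `s_k` being a sum of at most two sines of `ω` shifted by `±k`.
Since `|s_k| ≤ 2`, the `L¹` norms of the terms are at most `2 |γ[k]| ‖f‖₁`, which is summable,
so the series may be integrated term by term; the `k`-th term integrates to
`γ[k] (g(2τ + k) + g(2τ − k))`, resp. `γ[0] g(2τ)`.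
-/

/-- The constant term of a cosine series has weight one, so at `k = 0` only one shift is taken. -/
def symmShiftSum (h : ℝ → ℝ) (x : ℝ) : ℕ → ℝ
  | 0 => h x
  | k + 1 => h (x + (k + 1)) + h (x - (k + 1))

theorem symmShiftSum_const_mul (a : ℝ) (h : ℝ → ℝ) (x : ℝ) (k : ℕ) :
    symmShiftSum (fun y => a * h y) x k = a * symmShiftSum h x k := by
  cases k <;> simp only [symmShiftSum, mul_add]

theorem abs_symmShiftSum_le {h : ℝ → ℝ} {B : ℝ} (hB : 0 ≤ B) (hh : ∀ y, |h y| ≤ B)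
    (x : ℝ) (k : ℕ) : |symmShiftSum h x k| ≤ 2 * B := by
  cases k with
  | zero => exact (hh x).trans (by linarith)
  | succ k => exact (abs_add_le _ _).trans (by linarith [hh (x + (k + 1)), hh (x - (k + 1))])

section Integral

variable {α : Type*} [MeasurableSpace α] {μ : Measure α}

theorem MeasureTheory.Integrable.symmShiftSum {Φ : ℝ → α → ℝ} (hΦ : ∀ y, Integrable (Φ y) μ) (x : ℝ) (k : ℕ) :
    Integrable (fun a => symmShiftSum (fun y => Φ y a) x k) μ := by
  cases k with
  | zero => exact hΦ x
  | succ k => exact (hΦ _).add (hΦ _)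

theorem integral_symmShiftSum {Φ : ℝ → α → ℝ} (hΦ : ∀ y, Integrable (Φ y) μ) (x : ℝ) (k : ℕ) :
    ∫ a, symmShiftSum (fun y => Φ y a) x k ∂μ = symmShiftSum (fun y => ∫ a, Φ y a ∂μ) x k := by
  cases k with
  | zero => rfl
  | succ k => exact integral_add (hΦ _) (hΦ _)

theorem hasSum_integral_mul_of_summable_norm {ι : Type*} [Countable ι] {c : ι → ℝ}
    (hc : Summable fun i => ‖c i‖) {u : ι → α → ℝ} (hu : ∀ i, Integrable (u i) μ) {C : ℝ}
    (hC : ∀ i, ∫ a, ‖u i a‖ ∂μ ≤ C) :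
    HasSum (fun i => c i * ∫ a, u i a ∂μ) (∫ a, ∑' i, c i * u i a ∂μ) := by
  have hnorm (i : ι) : ∫ a, ‖c i * u i a‖ ∂μ ≤ ‖c i‖ * C := by
    simp only [norm_mul, integral_const_mul]
    exact mul_le_mul_of_nonneg_left (hC i) (norm_nonneg _)
  have hsum : Summable fun i => ∫ a, ‖c i * u i a‖ ∂μ :=
    Summable.of_nonneg_of_le (fun i => integral_nonneg fun a => norm_nonneg _) hnorm
      (hc.mul_right C)
  simpa only [integral_const_mul] using
    hasSum_integral_of_summable_integral_norm (fun i => (hu i).const_mul (c i)) hsum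

end Integral

theorem tsum_mul_symmShiftSum_sin {c : ℕ → ℝ} (hc : Summable fun k => |c k|) (ω x : ℝ) :
    ∑' k, c k * symmShiftSum (fun y => sin (ω * y)) x k =
      (c 0 + 2 * ∑' k : ℕ, c (k + 1) * cos ((k + 1) * ω)) * sin (ω * x) := by
  have hsum : Summable fun k => c k * symmShiftSum (fun y => sin (ω * y)) x k :=
    Summable.of_norm_bounded (hc.mul_right 2) fun k => by
      rw [Real.norm_eq_abs, abs_mul]
      exact mul_le_mul_of_nonneg_left
        (by simpa using abs_symmShiftSum_le zero_le_one (fun y => abs_sin_le_one (ω * y)) x k)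
        (abs_nonneg _)
  have hsucc (k : ℕ) : symmShiftSum (fun y => sin (ω * y)) x (k + 1) =
      2 * cos ((k + 1) * ω) * sin (ω * x) := by
    rw [symmShiftSum, mul_right_comm, two_mul_sin_mul_cos, add_comm]
    ring_nf
  rw [hsum.tsum_eq_zero_add]
  simp only [hsucc]
  rw [symmShiftSum]
  rw [add_mul, mul_assoc 2, ← tsum_mul_right, ← tsum_mul_left]
  congr 1
  exact tsum_congr fun k => by ring

theorem MeasureTheory.Integrable.mul_sin {μ : Measure ℝ} {f : ℝ → ℝ} (hf : Integrable f μ) (y : ℝ) :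
    Integrable (fun ω => f ω * sin (ω * y)) μ :=
  hf.mul_bdd (by fun_prop) (c := 1) (ae_of_all _ fun ω => by simpa using abs_sin_le_one (ω * y))

theorem hasSum_integral_cosSeries_mul_sin {μ : Measure ℝ} {f : ℝ → ℝ} (hf : Integrable f μ)
    {c : ℕ → ℝ} (hc : Summable fun k => |c k|) (x : ℝ) :
    HasSum (fun k => c k * symmShiftSum (fun y => ∫ ω, f ω * sin (ω * y) ∂μ) x k)
      (∫ ω, (c 0 + 2 * ∑' k : ℕ, c (k + 1) * cos ((k + 1) * ω)) * f ω * sin (ω * x) ∂μ) := by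
  have hbound (k : ℕ) :
      ∫ ω, ‖symmShiftSum (fun y => f ω * sin (ω * y)) x k‖ ∂μ ≤ ∫ ω, 2 * |f ω| ∂μ :=
    integral_mono (Integrable.symmShiftSum hf.mul_sin x k).norm (hf.abs.const_mul 2) fun ω =>
      abs_symmShiftSum_le (abs_nonneg _)
        (fun y => by simpa [abs_mul] using
          mul_le_mul_of_nonneg_left (abs_sin_le_one (ω * y)) (abs_nonneg (f ω))) x k
  have := hasSum_integral_mul_of_summable_norm hc (Integrable.symmShiftSum hf.mul_sin x) hbound
  simp only [integral_symmShiftSum hf.mul_sin] at this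
  convert this using 1
  congr 1 with ω
  simp only [symmShiftSum_const_mul]
  rw [mul_assoc, mul_left_comm, ← tsum_mul_symmShiftSum_sin hc, ← tsum_mul_left]
  exact tsum_congr fun k => by ring

theorem packet_crosscorr_recursion_general
    (A₀ : ℝ → ℂ)
    (γa : ℤ → ℝ)
    (hγsum : Summable fun k : ℤ => |γa k|)
    (hmod : ∀ ω : ℝ, ‖A₀ ω‖ ^ 2 = γa 0 + 2 * ∑' k : ℕ, γa (k + 1) * Real.cos (((k : ℝ) + 1) * ω))
    (f : ℝ → ℝ)
    (hf1 : Integrable f (volume : Measure ℝ))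
    (g G : ℝ → ℝ)
    (hg : ∀ τ : ℝ, g τ = -(1 / π) * ∫ ω in Set.Ioi (0 : ℝ), f ω * Real.sin (ω * τ))
    (hG : ∀ τ : ℝ, G τ = -(1 / π) * ∫ ω in Set.Ioi (0 : ℝ),
      ‖A₀ ω‖ ^ 2 * f ω * Real.sin (2 * ω * τ)) :
    ∀ τ : ℝ, G τ = γa 0 * g (2 * τ) +
      ∑' k : ℕ, γa (k + 1) * (g (2 * τ + ((k : ℝ) + 1)) + g (2 * τ - ((k : ℝ) + 1))) := by
  intro τ
  have hc : Summable fun k : ℕ => |γa k| := hγsum.comp_injective Nat.cast_injective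
  have key := (hasSum_integral_cosSeries_mul_sin (hf1.integrableOn (s := Set.Ioi 0)) hc
    (2 * τ)).mul_left (-(1 / π))
  have hterms : (fun k : ℕ => -(1 / π) * (γa k * symmShiftSum
      (fun y => ∫ ω in Set.Ioi 0, f ω * sin (ω * y)) (2 * τ) k)) =
      fun k : ℕ => γa k * symmShiftSum g (2 * τ) k := by
    ext k
    rw [show g = fun y => -(1 / π) * ∫ ω in Set.Ioi 0, f ω * sin (ω * y) from funext hg,
      symmShiftSum_const_mul]
    ring
  have hintegral : -(1 / π) * ∫ ω in Set.Ioi 0, ((γa (0 : ℕ) + 2 * ∑' k : ℕ, γa ((k + 1 : ℕ) : ℤ) *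
      cos ((k + 1) * ω)) * f ω * sin (ω * (2 * τ))) = G τ := by
    rw [hG]
    congr 2 with ω
    push_cast
    rw [hmod, mul_comm 2 ω, mul_assoc ω]
  rw [hterms, hintegral] at key
  rw [← key.tsum_eq, key.summable.tsum_eq_zero_add]
  simp [symmShiftSum]

/-- Two-scale recursion for wavelet-packet cross-correlations: with
`A₀(ω) = Σ_k a₀[k] e^{−ikω}`, `γ_{a₀}[k] = Σ_q a₀[q]a₀[q−k]`,
`g(τ) = −(1/π)∫₀^∞ f(ω) sin(ωτ) dω` and
`G(τ) = −(1/π)∫₀^∞ |A₀(ω)|² f(ω) sin(2ωτ) dω`, one has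
`G(τ) = γ_{a₀}[0] g(2τ) + Σ_{k≥1} γ_{a₀}[k](g(2τ+k) + g(2τ−k))`. -/
theorem packet_crosscorr_recursion (a₀ : ℤ → ℝ)
    (ha : Summable fun k : ℤ => |a₀ k|)
    (A₀ : ℝ → ℂ)
    (hA : ∀ ω : ℝ, A₀ ω = ∑' k : ℤ, (a₀ k : ℂ) * Complex.exp (-Complex.I * k * ω))
    (γa : ℤ → ℝ)
    (hγa : ∀ k : ℤ, γa k = ∑' q : ℤ, a₀ q * a₀ (q - k))
    (hγsum : Summable fun k : ℤ => |γa k|)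
    (hmod : ∀ ω : ℝ, ‖A₀ ω‖ ^ 2 = γa 0 + 2 * ∑' k : ℕ, γa (k + 1) * Real.cos (((k : ℝ) + 1) * ω))
    (f : ℝ → ℝ)
    (hf1 : Integrable f (volume : Measure ℝ))
    (hfbd : ∃ B : ℝ, ∀ ω : ℝ, |f ω| ≤ B)
    (g G : ℝ → ℝ)
    (hg : ∀ τ : ℝ, g τ = -(1 / π) * ∫ ω in Set.Ioi (0 : ℝ), f ω * Real.sin (ω * τ))
    (hG : ∀ τ : ℝ, G τ = -(1 / π) * ∫ ω in Set.Ioi (0 : ℝ),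
      ‖A₀ ω‖ ^ 2 * f ω * Real.sin (2 * ω * τ)) :
    ∀ τ : ℝ, G τ = γa 0 * g (2 * τ) +
      ∑' k : ℕ, γa (k + 1) * (g (2 * τ + ((k : ℝ) + 1)) + g (2 * τ - ((k : ℝ) + 1))) :=
  packet_crosscorr_recursion_general A₀ γa hγsum hmod f hf1 g G hg hG
end

section
/- For all τ ∈ ℝ, −(1/π) ∫₀^∞ sinc²(ω/4) sin²(ω/4) sin(ωτ) dω = (1/π) [ 6τ ln|τ| + (τ+1) ln|τ+1| + (τ−1) ln|τ−1| − 4(τ+1/2) ln|τ+1/2| − 4(τ−1/2) ln|τ−1/2| ], where sinc(u) = sin(u)/u (with sinc(0)=1) and the convention 0·ln 0 = 0 is used. -/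
/-!
Since `sinc (ω/4)² sin² (ω/4) = 16 sin⁴ (ω/4) / ω²` and `16 sin⁴ θ sin t` is the fourth central
difference of `sin` at `t` with step `2θ`, the integrand equals
`6 k τ - 4 k (τ + 1/2) - 4 k (τ - 1/2) + k (τ + 1) + k (τ - 1)` with
`k a ω = (sin (a ω) - a sin ω) / ω²`: the added terms `a sin ω` cancel because the weights and
their first moments both sum to zero, and they make each `k a` integrable near `0`.
As `k a ω = a ω⁻¹ (sinc (a ω) - sinc ω)`, Frullani's integral for `sinc`, which tends to `1`
at `0` and to `0` at infinity, gives `∫₀^∞ k a = -a log |a|`.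
-/

open MeasureTheory Real

noncomputable def sinc (u : ℝ) : ℝ := if u = 0 then 1 else Real.sin u / u

open Set Filter Topology

noncomputable def sinKernel (a x : ℝ) : ℝ := (sin (a * x) - a * sin x) / x ^ 2

lemma abs_sin_mul_sub_mul_sin_le (a x : ℝ) :
    |sin (a * x) - a * sin x| ≤ (|a| ^ 3 + |a|) * |x| ^ 3 / 6 := by
  have h₁ := abs_sub_sin_le (a * x)
  have h₂ := abs_sub_sin_le x
  calc |sin (a * x) - a * sin x| = |(a * x - a * sin x) - (a * x - sin (a * x))| := by ring_nf
    _ ≤ |a| * |x - sin x| + |a * x - sin (a * x)| := by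
        rw [← abs_mul, mul_sub]; exact abs_sub _ _
    _ ≤ |a| * (|x| ^ 3 / 6) + |a * x| ^ 3 / 6 := by gcongr
    _ = (|a| ^ 3 + |a|) * |x| ^ 3 / 6 := by rw [abs_mul]; ring

lemma abs_sin_mul_sub_mul_sin_le_one_add (a x : ℝ) : |sin (a * x) - a * sin x| ≤ 1 + |a| := by
  calc |sin (a * x) - a * sin x| ≤ |sin (a * x)| + |a| * |sin x| := by
        rw [← abs_mul]; exact abs_sub _ _
    _ ≤ 1 + |a| * 1 := by gcongr <;> exact abs_sin_le_one _
    _ = 1 + |a| := by ring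

lemma integrable_sinKernel (a : ℝ) : Integrable (sinKernel a) := by
  set C := 2 * (1 + |a| + |a| ^ 3)
  have hmeas : Measurable (sinKernel a) := by unfold sinKernel; fun_prop
  refine (integrable_inv_one_add_sq.const_mul C).mono' hmeas.aestronglyMeasurable
    (ae_of_all _ fun x => ?_)
  rcases eq_or_ne x 0 with rfl | hx
  · simp [sinKernel]; positivity
  have hx2 : 0 < x ^ 2 := by positivity
  suffices |sin (a * x) - a * sin x| * (1 + x ^ 2) ≤ C * x ^ 2 by
    rw [Real.norm_eq_abs, sinKernel, abs_div, abs_of_pos hx2, div_le_iff₀ hx2, mul_assoc,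
      ← div_eq_inv_mul, mul_div_assoc', le_div_iff₀ (by positivity)]
    linarith
  have ha := abs_nonneg a
  rcases le_total |x| 1 with h1 | h1
  · have := abs_sin_mul_sub_mul_sin_le a x
    have hx3 : |x| ^ 3 ≤ x ^ 2 := by
      rw [← sq_abs x]; nlinarith [abs_nonneg x, sq_nonneg |x|]
    have hx1 : x ^ 2 ≤ 1 := by rw [← sq_abs x]; nlinarith [abs_nonneg x]
    calc |sin (a * x) - a * sin x| * (1 + x ^ 2) ≤ (|a| ^ 3 + |a|) * x ^ 2 / 6 * 2 := by
          gcongr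
          · exact this.trans (by gcongr)
          · linarith
      _ ≤ C * x ^ 2 := by simp only [C]; nlinarith [pow_nonneg ha 3]
  · have := abs_sin_mul_sub_mul_sin_le_one_add a x
    have hx1 : 1 ≤ x ^ 2 := by rw [← sq_abs x]; nlinarith
    simp only [C]; nlinarith [pow_nonneg ha 3]

lemma tendsto_sinc_atTop : Tendsto Real.sinc atTop (𝓝 0) := by
  refine squeeze_zero_norm' ?_ tendsto_inv_atTop_zero
  filter_upwards [eventually_gt_atTop 0] with x hx
  rw [Real.sinc_of_ne_zero hx.ne', Real.norm_eq_abs, abs_div, abs_of_pos hx, div_eq_mul_inv]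
  exact mul_le_of_le_one_left (by positivity) (abs_sin_le_one x)

lemma sinKernel_eq_mul_inv_mul_sinc_sub_sinc {x : ℝ} (hx : x ≠ 0) (a : ℝ) :
    sinKernel a x = a * (x⁻¹ * (Real.sinc (a * x) - Real.sinc x)) := by
  rcases eq_or_ne a 0 with rfl | ha
  · simp [sinKernel]
  rw [sinKernel, Real.sinc_of_ne_zero (mul_ne_zero ha hx), Real.sinc_of_ne_zero hx]
  field_simp

lemma sinc_abs_mul (a x : ℝ) : Real.sinc (|a| * x) = Real.sinc (a * x) := by
  rcases abs_choice a with h | h <;> rw [h]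
  rw [neg_mul, Real.sinc_neg]

lemma integral_sinKernel (a : ℝ) : ∫ x in Ioi 0, sinKernel a x = -(a * log |a|) := by
  rcases eq_or_ne a 0 with rfl | ha
  · simp [sinKernel]
  have hb : 0 < |a| := abs_pos.mpr ha
  have hfrullani :
      ∫ x in Ioi 0, x⁻¹ • (Real.sinc (|a| * x) - Real.sinc (1 * x)) = -log |a| := by
    rw [Frullani.integral_Ioi_eq (L := 1) (R := 0)
      (Real.continuous_sinc.locallyIntegrable.locallyIntegrableOn _) hb one_pos
      (Real.continuous_sinc.tendsto' 0 1 Real.sinc_zero |>.mono_left nhdsWithin_le_nhds)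
      tendsto_sinc_atTop]
    · simp [Real.log_inv]
    · refine IntegrableOn.congr_fun ((integrable_sinKernel |a|).integrableOn.const_mul |a|⁻¹)
        (fun x hx => ?_) measurableSet_Ioi
      simp only [one_mul, smul_eq_mul]
      rw [sinKernel_eq_mul_inv_mul_sinc_sub_sinc (ne_of_gt hx), inv_mul_cancel_left₀ hb.ne']
  calc ∫ x in Ioi 0, sinKernel a x
      = ∫ x in Ioi 0, a * (x⁻¹ • (Real.sinc (|a| * x) - Real.sinc (1 * x))) :=
        setIntegral_congr_fun measurableSet_Ioi fun x hx => by
          rw [sinKernel_eq_mul_inv_mul_sinc_sub_sinc (ne_of_gt hx), sinc_abs_mul, one_mul,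
            smul_eq_mul]
    _ = -(a * log |a|) := by rw [integral_const_mul, hfrullani, mul_neg]

lemma sin_pow_four_mul_sin (θ t : ℝ) :
    16 * sin θ ^ 4 * sin t = 6 * sin t - 4 * sin (t + 2 * θ) - 4 * sin (t - 2 * θ)
      + sin (t + 4 * θ) + sin (t - 4 * θ) := by
  have h4 : 4 * θ = 2 * (2 * θ) := by ring
  simp only [sin_add, sin_sub, h4, cos_two_mul, sin_two_mul, cos_sq']
  ring

lemma sinc_sq_mul_sin_sq_mul_sin_eq (τ : ℝ) {ω : ℝ} (hω : ω ≠ 0) :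
    _root_.sinc (ω / 4) ^ 2 * sin (ω / 4) ^ 2 * sin (ω * τ) =
      6 * sinKernel τ ω - 4 * sinKernel (τ + 1 / 2) ω - 4 * sinKernel (τ - 1 / 2) ω
        + sinKernel (τ + 1) ω + sinKernel (τ - 1) ω := by
  have hsinc : _root_.sinc (ω / 4) = sin (ω / 4) / (ω / 4) :=
    if_neg (div_ne_zero hω four_ne_zero)
  calc _root_.sinc (ω / 4) ^ 2 * sin (ω / 4) ^ 2 * sin (ω * τ)
      = 16 * sin (ω / 4) ^ 4 * sin (ω * τ) / ω ^ 2 := by rw [hsinc]; field_simp; ring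
    _ = _ := by
      rw [sin_pow_four_mul_sin]
      simp only [sinKernel]
      ring_nf

/-- Closed form of the Haar wavelet/Hilbert transform cross-correlation:
`−(1/π)∫₀^∞ sinc²(ω/4) sin²(ω/4) sin(ωτ) dω
 = (1/π)[6τ ln|τ| + (τ+1)ln|τ+1| + (τ−1)ln|τ−1|
   − 4(τ+1/2)ln|τ+1/2| − 4(τ−1/2)ln|τ−1/2|]`
(with the convention `0·ln 0 = 0`, automatic since `Real.log 0 = 0`). -/
theorem haar_crosscorr_closed_form :
    ∀ τ : ℝ,
      -(1 / π) * (∫ ω in Set.Ioi (0 : ℝ),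
          _root_.sinc (ω / 4) ^ 2 * Real.sin (ω / 4) ^ 2 * Real.sin (ω * τ)) =
      (1 / π) * (6 * τ * Real.log |τ| + (τ + 1) * Real.log |τ + 1| +
        (τ - 1) * Real.log |τ - 1| - 4 * (τ + 1 / 2) * Real.log |τ + 1 / 2| -
        4 * (τ - 1 / 2) * Real.log |τ - 1 / 2|) := by
  intro τ
  have hk (a : ℝ) : Integrable (sinKernel a) (volume.restrict (Ioi 0)) :=
    (integrable_sinKernel a).integrableOn
  rw [setIntegral_congr_fun measurableSet_Ioi
      fun ω hω => sinc_sq_mul_sin_sq_mul_sin_eq τ (ne_of_gt hω),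
    integral_add (by fun_prop) (hk _), integral_add (by fun_prop) (hk _),
    integral_sub (by fun_prop) (by fun_prop), integral_sub (by fun_prop) (by fun_prop),
    integral_const_mul, integral_const_mul, integral_const_mul]
  simp only [integral_sinKernel]
  ring
end

section
/- Define q₀ = −35/16, q₁ = 7/4, q₂ = −7/8, q₃ = 1/4, q₄ = −1/32, and γ(τ) = (1/3π)[ q₀ τ³ ln|τ| + Σ_{p=1}^{4} q_p ( (τ+p)³ ln|τ+p| + (τ−p)³ ln|τ−p| ) ] (convention 0·ln 0 = 0). Then γ(τ) · τ⁵ → −3/(2π) as |τ| → ∞, i.e. γ(τ) ∼ −3/(2πτ⁵). -/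
/-!
Writing `τ ± p = τ (1 ± p/τ)`, each pair `(τ+p)³ log|τ+p| + (τ-p)³ log|τ-p|` splits into
`(2τ³ + 6p²τ) log|τ| + τ³ G(p/τ)` with `G(u) = (1+u)³ log(1+u) + (1-u)³ log(1-u)
= 5u² + u⁴/2 + u⁶/30 + u⁸/140 + O(u⁹)`. The weights satisfy
`q₀ + 2 Σ q_p = Σ q_p p² = Σ q_p p⁴ = Σ q_p p⁶ = 0`, so the `log|τ|` terms and the first three
Taylor terms cancel after multiplying by `τ⁵`, leaving the limit
`(1/3π) · (1/140) · Σ q_p p⁸ = (1/3π) · (-630/140) = -3/(2π)`.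
-/

open Real Filter Topology Finset Bornology

lemma abs_log_one_sub_add_sum_range_le {z : ℝ} (hz : |z| ≤ 1 / 2) (n : ℕ) :
    |∑ i ∈ range n, z ^ (i + 1) / (i + 1) + log (1 - z)| ≤ 2 * |z| ^ (n + 1) := by
  refine (abs_log_sub_add_sum_range_le (hz.trans_lt (by norm_num)) n).trans ?_
  rw [div_le_iff₀ (by linarith)]
  nlinarith [pow_nonneg (abs_nonneg z) (n + 1)]

noncomputable def symCubeLog (u : ℝ) : ℝ :=
  (1 + u) ^ 3 * log (1 + u) + (1 - u) ^ 3 * log (1 - u)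

/-- The polynomial is the exact polynomial part of `(1+u)³ T(-u) + (1-u)³ T(u)`, where `T` is the
degree-8 Taylor polynomial of `-log (1 - z)`. -/
lemma abs_symCubeLog_sub_le {u : ℝ} (hu : |u| ≤ 1 / 2) :
    |symCubeLog u - (5 * u ^ 2 + u ^ 4 / 2 + u ^ 6 / 30 + u ^ 8 / 140 - 13 / 28 * u ^ 10)|
      ≤ 14 * |u| ^ 9 := by
  set T : ℝ → ℝ := fun z ↦ ∑ i ∈ range 8, z ^ (i + 1) / (i + 1)
  have hsplit : symCubeLog u - (5 * u ^ 2 + u ^ 4 / 2 + u ^ 6 / 30 + u ^ 8 / 140 - 13 / 28 * u ^ 10)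
      = (1 + u) ^ 3 * (T (-u) + log (1 - -u)) + (1 - u) ^ 3 * (T u + log (1 - u)) := by
    simp only [T, symCubeLog, sum_range_succ, sum_range_zero, sub_neg_eq_add]
    push_cast
    ring
  have hcube : ∀ v : ℝ, |v| ≤ 1 / 2 → |(1 + v) ^ 3| ≤ 27 / 8 := fun v hv ↦ by
    rw [abs_pow]
    calc |1 + v| ^ 3 ≤ (3 / 2 : ℝ) ^ 3 := by
          gcongr
          exact (abs_add_le 1 v).trans (by rw [abs_one]; linarith)
      _ = 27 / 8 := by norm_num
  have hneg : |-u| ≤ 1 / 2 := by rwa [abs_neg]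
  have h₁ := mul_le_mul (hcube u hu) (abs_log_one_sub_add_sum_range_le hneg 8)
    (abs_nonneg _) (by norm_num)
  have h₂ := mul_le_mul (hcube (-u) hneg) (abs_log_one_sub_add_sum_range_le hu 8)
    (abs_nonneg _) (by norm_num)
  rw [abs_neg] at h₁
  rw [← sub_eq_add_neg] at h₂
  rw [hsplit]
  calc _ ≤ _ := abs_add_le _ _
    _ = |(1 + u) ^ 3| * |T (-u) + log (1 - -u)| + |(1 - u) ^ 3| * |T u + log (1 - u)| := by
        rw [abs_mul, abs_mul]
    _ ≤ 14 * |u| ^ 9 := by nlinarith [pow_nonneg (abs_nonneg u) 9]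

lemma tendsto_symCubeLog_sub_div_pow_eight :
    Tendsto (fun u ↦ (symCubeLog u - (5 * u ^ 2 + u ^ 4 / 2 + u ^ 6 / 30)) / u ^ 8) (𝓝[≠] 0)
      (𝓝 (1 / 140)) := by
  set R : ℝ → ℝ := fun u ↦
    symCubeLog u - (5 * u ^ 2 + u ^ 4 / 2 + u ^ 6 / 30 + u ^ 8 / 140 - 13 / 28 * u ^ 10)
  have hR : Tendsto (fun u ↦ R u / u ^ 8) (𝓝[≠] 0) (𝓝 0) := by
    refine squeeze_zero_norm' ?_ (tendsto_nhdsWithin_of_tendsto_nhds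
      ((continuous_abs.tendsto' 0 0 abs_zero).const_mul 14 |>.trans (by rw [mul_zero])))
    filter_upwards [nhdsWithin_le_nhds (Metric.closedBall_mem_nhds (0 : ℝ) one_half_pos)]
      with u hu
    rw [Metric.mem_closedBall, dist_zero_right, norm_eq_abs] at hu
    simp only [norm_div, norm_pow, norm_eq_abs]
    rcases eq_or_ne u 0 with rfl | hu0
    · simp
    rw [div_le_iff₀ (by positivity)]
    exact (abs_symCubeLog_sub_le hu).trans_eq (by ring)
  have hpoly : Tendsto (fun u : ℝ ↦ 1 / 140 - 13 / 28 * u ^ 2) (𝓝[≠] 0) (𝓝 (1 / 140)) :=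
    tendsto_nhdsWithin_of_tendsto_nhds <| Continuous.tendsto' (by fun_prop) _ _ (by norm_num)
  refine (hpoly.add hR).congr' ?_ |>.trans (by rw [add_zero])
  filter_upwards [self_mem_nhdsWithin] with u (hu : u ≠ 0)
  simp only [R]
  field_simp
  ring

lemma tendsto_const_div_cobounded_nhdsNE {p : ℝ} (hp : p ≠ 0) :
    Tendsto (fun τ : ℝ ↦ p / τ) (cobounded ℝ) (𝓝[≠] 0) := by
  refine tendsto_nhdsWithin_iff.mpr ⟨?_, ?_⟩
  · simpa only [div_eq_mul_inv, mul_zero] using (tendsto_inv₀_cobounded (α := ℝ)).const_mul p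
  · filter_upwards [eventually_ne_cobounded 0] with τ hτ
    exact div_ne_zero hp hτ

lemma tendsto_pow_eight_mul_symCubeLog_div_sub (p : ℝ) :
    Tendsto (fun τ ↦ τ ^ 8 * symCubeLog (p / τ)
        - (5 * p ^ 2 * τ ^ 6 + p ^ 4 * τ ^ 4 / 2 + p ^ 6 * τ ^ 2 / 30))
      (cobounded ℝ) (𝓝 (p ^ 8 / 140)) := by
  rcases eq_or_ne p 0 with rfl | hp
  · simp [symCubeLog]
  refine ((tendsto_symCubeLog_sub_div_pow_eight.comp
    (tendsto_const_div_cobounded_nhdsNE hp)).const_mul (p ^ 8)).congr' ?_ |>.trans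
    (by rw [mul_one_div])
  filter_upwards [eventually_ne_cobounded 0] with τ hτ
  simp only [Function.comp_apply]
  field_simp

lemma cube_mul_log_mul {τ : ℝ} (hτ : τ ≠ 0) (y : ℝ) :
    (τ * y) ^ 3 * log (τ * y) = (τ * y) ^ 3 * log τ + τ ^ 3 * (y ^ 3 * log y) := by
  rcases eq_or_ne y 0 with rfl | hy
  · simp
  rw [log_mul hτ hy]
  ring

lemma pow_five_mul_cube_log_abs_add_sub {τ : ℝ} (hτ : τ ≠ 0) (p : ℝ) :
    τ ^ 5 * ((τ + p) ^ 3 * log |τ + p| + (τ - p) ^ 3 * log |τ - p|)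
      = (2 * τ ^ 8 + 6 * p ^ 2 * τ ^ 6) * log |τ| + τ ^ 8 * symCubeLog (p / τ) := by
  have hadd : τ + p = τ * (1 + p / τ) := by field_simp
  have hsub : τ - p = τ * (1 - p / τ) := by field_simp
  rw [log_abs, log_abs, log_abs, hadd, hsub, cube_mul_log_mul hτ, cube_mul_log_mul hτ, symCubeLog]
  field_simp
  ring

theorem tendsto_pow_five_mul_weighted_cube_log {ι : Type*} (s : Finset ι) (c₀ : ℝ) (c p : ι → ℝ)
    (h₀ : c₀ + 2 * ∑ i ∈ s, c i = 0) (h₂ : ∑ i ∈ s, c i * p i ^ 2 = 0)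
    (h₄ : ∑ i ∈ s, c i * p i ^ 4 = 0) (h₆ : ∑ i ∈ s, c i * p i ^ 6 = 0) :
    Tendsto (fun τ ↦ τ ^ 5 * (c₀ * τ ^ 3 * log |τ| +
        ∑ i ∈ s, c i * ((τ + p i) ^ 3 * log |τ + p i| + (τ - p i) ^ 3 * log |τ - p i|)))
      (cobounded ℝ) (𝓝 (∑ i ∈ s, c i * (p i ^ 8 / 140))) := by
  set E : ι → ℝ → ℝ := fun i τ ↦ τ ^ 8 * symCubeLog (p i / τ)
    - (5 * p i ^ 2 * τ ^ 6 + p i ^ 4 * τ ^ 4 / 2 + p i ^ 6 * τ ^ 2 / 30)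
  refine (tendsto_finsetSum s fun i _ ↦
    (tendsto_pow_eight_mul_symCubeLog_div_sub (p i)).const_mul (c i)).congr' ?_
  filter_upwards [eventually_ne_cobounded 0] with τ hτ
  set L := log |τ|
  have hterm : ∀ i ∈ s,
      τ ^ 5 * (c i * ((τ + p i) ^ 3 * log |τ + p i| + (τ - p i) ^ 3 * log |τ - p i|))
      = c i * E i τ + (c i * (2 * τ ^ 8 * L) + c i * p i ^ 2 * (6 * τ ^ 6 * L + 5 * τ ^ 6)
        + c i * p i ^ 4 * (τ ^ 4 / 2) + c i * p i ^ 6 * (τ ^ 2 / 30)) := fun i _ ↦ by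
    rw [mul_left_comm, pow_five_mul_cube_log_abs_add_sub hτ]
    ring
  rw [mul_add, mul_sum, sum_congr rfl hterm]
  simp only [sum_add_distrib, ← sum_mul]
  linear_combination (-τ ^ 8 * L) * h₀ - (6 * τ ^ 6 * L + 5 * τ ^ 6) * h₂ - τ ^ 4 / 2 * h₄
    - τ ^ 2 / 30 * h₆

/-- Asymptotics of the Franklin `γ_{χ,χᴴ}` closed form: with
`q₀ = −35/16, q₁ = 7/4, q₂ = −7/8, q₃ = 1/4, q₄ = −1/32` and
`γ(τ) = (1/3π)[q₀τ³ln|τ| + Σ_{p=1}^4 q_p((τ+p)³ln|τ+p| + (τ−p)³ln|τ−p|)]`,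
one has `τ⁵ γ(τ) → −3/(2π)` as `|τ| → ∞`. -/
theorem franklin_chi_crosscorr_asymptotics
    (q : ℕ → ℝ) (hq0 : q 0 = -35 / 16) (hq1 : q 1 = 7 / 4) (hq2 : q 2 = -7 / 8)
    (hq3 : q 3 = 1 / 4) (hq4 : q 4 = -1 / 32)
    (γ : ℝ → ℝ)
    (hγ : ∀ τ : ℝ, γ τ = (1 / (3 * π)) * (q 0 * τ ^ 3 * Real.log |τ| +
      ∑ p ∈ Finset.Icc 1 4, q p * ((τ + (p : ℝ)) ^ 3 * Real.log |τ + (p : ℝ)| +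
        (τ - (p : ℝ)) ^ 3 * Real.log |τ - (p : ℝ)|))) :
    Tendsto (fun τ : ℝ => γ τ * τ ^ 5) (cocompact ℝ) (nhds (-3 / (2 * π))) := by
  have hIcc : ∀ f : ℕ → ℝ, ∑ p ∈ Icc 1 4, f p = f 1 + f 2 + f 3 + f 4 := fun f ↦ by
    rw [show Icc 1 4 = {1, 2, 3, 4} from rfl]
    simp [add_assoc]
  have hlim := tendsto_pow_five_mul_weighted_cube_log (Icc 1 4) (q 0) q (fun p ↦ (p : ℝ))
    (by rw [hIcc]; norm_num [hq0, hq1, hq2, hq3, hq4])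
    (by rw [hIcc]; norm_num [hq1, hq2, hq3, hq4])
    (by rw [hIcc]; norm_num [hq1, hq2, hq3, hq4])
    (by rw [hIcc]; norm_num [hq1, hq2, hq3, hq4])
  rw [← Metric.cobounded_eq_cocompact]
  convert hlim.const_mul (1 / (3 * π)) using 2 with τ
  · rw [hγ]
    ring
  · rw [hIcc]
    field_simp
    norm_num [hq1, hq2, hq3, hq4]
end

section
/- Let (g_k)_{k∈ℤ} be an absolutely summable sequence of reals with Σ_k (1+|k|⁵)|g_k| < ∞, and let γ : ℝ → ℝ be a bounded continuous function with lim_{|u|→∞} u⁵ γ(u) = L ∈ ℝ (so sup_u |u|⁵ |γ(u)| < ∞). Define F(τ) = Σ_{k∈ℤ} g_k γ(2τ − k). Then lim_{|τ|→∞} τ⁵ F(τ) = (L/32) Σ_{k∈ℤ} g_k. -/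
open Real Filter

private lemma add_pow_five_le (a b : ℝ) (ha : 0 ≤ a) (hb : 0 ≤ b) :
    (a + b) ^ 5 ≤ 32 * (a ^ 5 + b ^ 5) := by
  have h1 : a + b ≤ 2 * max a b := by
    rw [two_mul]
    exact add_le_add (le_max_left a b) (le_max_right a b)
  have h2 : (a + b) ^ 5 ≤ (2 * max a b) ^ 5 :=
    pow_le_pow_left₀ (by positivity) h1 5
  have h3 : (max a b) ^ 5 ≤ a ^ 5 + b ^ 5 := by
    rcases max_cases a b with ⟨h, _⟩ | ⟨h, _⟩ <;> rw [h]
    · exact le_add_of_nonneg_right (by positivity)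
    · exact le_add_of_nonneg_left (by positivity)
  calc (a + b) ^ 5 ≤ (2 * max a b) ^ 5 := h2
    _ = 32 * (max a b) ^ 5 := by ring
    _ ≤ 32 * (a ^ 5 + b ^ 5) := by linarith

private lemma cocompact_affine (k : ℝ) :
    Tendsto (fun τ : ℝ => 2 * τ - k) (cocompact ℝ) (cocompact ℝ) := by
  rw [cocompact_eq_atBot_atTop, tendsto_sup]
  constructor
  · exact (tendsto_atBot_add_const_right _ (-k)
      (tendsto_id.const_mul_atBot two_pos)).mono_right le_sup_left |>.congr
      fun x => by simp only [id_eq]; ring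
  · exact (tendsto_atTop_add_const_right _ (-k)
      (tendsto_id.const_mul_atTop two_pos)).mono_right le_sup_right |>.congr
      fun x => by simp only [id_eq]; ring

/-- Asymptotics of a discrete convolution against a dilated kernel: if
`Σ_k (1+|k|⁵)|g_k| < ∞`, `γ` is bounded continuous with
`u⁵γ(u) → L` as `|u| → ∞`, and `F(τ) = Σ_k g_k γ(2τ − k)`, then
`τ⁵ F(τ) → (L/32) Σ_k g_k` as `|τ| → ∞`. -/
theorem dilated_convolution_asymptotics
    (g : ℤ → ℝ) (hg : Summable fun k : ℤ => (1 + |(k : ℝ)| ^ 5) * |g k|)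
    (γ : ℝ → ℝ) (hγc : Continuous γ) (hγb : ∃ B : ℝ, ∀ u : ℝ, |γ u| ≤ B)
    (L : ℝ)
    (hγL : Tendsto (fun u : ℝ => u ^ 5 * γ u) (cocompact ℝ) (nhds L))
    (F : ℝ → ℝ)
    (hF : ∀ τ : ℝ, F τ = ∑' k : ℤ, g k * γ (2 * τ - (k : ℝ))) :
    Tendsto (fun τ : ℝ => τ ^ 5 * F τ) (cocompact ℝ)
      (nhds ((L / 32) * ∑' k : ℤ, g k)) := by
  obtain ⟨B, hB⟩ := hγb
  set B' : ℝ := max B 0 with hB'def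
  have hB' : ∀ u : ℝ, |γ u| ≤ B' := fun u => (hB u).trans (le_max_left _ _)
  have hB'0 : 0 ≤ B' := le_max_right _ _
  -- global bound on u^5 γ(u)
  have hM : ∃ M : ℝ, 0 ≤ M ∧ ∀ u : ℝ, |u ^ 5 * γ u| ≤ M := by
    have hev : ∀ᶠ u in cocompact ℝ, |u ^ 5 * γ u| ≤ |L| + 1 := by
      filter_upwards [Metric.tendsto_nhds.mp hγL 1 one_pos] with u hu
      rw [Real.dist_eq] at hu
      calc |u ^ 5 * γ u| = |u ^ 5 * γ u - L + L| := by ring_nf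
        _ ≤ |u ^ 5 * γ u - L| + |L| := abs_add_le _ _
        _ ≤ |L| + 1 := by linarith
    obtain ⟨t, htc, hts⟩ := Filter.mem_cocompact.mp hev
    obtain ⟨C, hC⟩ := htc.exists_bound_of_continuousOn
      ((continuous_pow 5 |>.mul hγc).continuousOn)
    refine ⟨max C (|L| + 1), le_trans (by positivity) (le_max_right _ _), fun u => ?_⟩
    by_cases hu : u ∈ t
    · exact le_trans (hC u hu) (le_max_left _ _)
    · exact le_trans (hts hu) (le_max_right _ _)
  obtain ⟨M, hM0, hM⟩ := hM
  set C : ℝ := 32 * max M B' with hCdef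
  have hC0 : 0 ≤ C := by positivity
  -- uniform domination
  have hbound : ∀ (τ : ℝ) (k : ℤ),
      |τ ^ 5 * γ (2 * τ - (k : ℝ))| ≤ C * (1 + |(k : ℝ)| ^ 5) := by
    intro τ k
    set u : ℝ := 2 * τ - (k : ℝ) with hudef
    have hτ : |τ| ≤ |u| + |(k : ℝ)| := by
      have : τ = (u + (k : ℝ)) / 2 := by rw [hudef]; ring
      rw [this]
      calc |(u + (k : ℝ)) / 2| ≤ |u + (k : ℝ)| := by
            rw [abs_div, abs_two]
            exact div_le_self (abs_nonneg _) one_le_two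
        _ ≤ |u| + |(k : ℝ)| := abs_add_le _ _
    have hτ5 : |τ| ^ 5 ≤ 32 * (|u| ^ 5 + |(k : ℝ)| ^ 5) :=
      le_trans (pow_le_pow_left₀ (abs_nonneg _) hτ 5)
        (add_pow_five_le _ _ (abs_nonneg _) (abs_nonneg _))
    have h1 : |u| ^ 5 * |γ u| ≤ M := by
      calc |u| ^ 5 * |γ u| = |u ^ 5 * γ u| := by
            rw [abs_mul, abs_pow]
        _ ≤ M := hM u
    have h2 : |(k : ℝ)| ^ 5 * |γ u| ≤ B' * |(k : ℝ)| ^ 5 := by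
      rw [mul_comm]
      exact mul_le_mul_of_nonneg_right (hB' u) (by positivity)
    calc |τ ^ 5 * γ u| = |τ| ^ 5 * |γ u| := by rw [abs_mul, abs_pow]
      _ ≤ 32 * (|u| ^ 5 + |(k : ℝ)| ^ 5) * |γ u| :=
          mul_le_mul_of_nonneg_right hτ5 (abs_nonneg _)
      _ = 32 * (|u| ^ 5 * |γ u| + |(k : ℝ)| ^ 5 * |γ u|) := by ring
      _ ≤ 32 * (M + B' * |(k : ℝ)| ^ 5) := by
          have := add_le_add h1 h2; linarith
      _ ≤ C * (1 + |(k : ℝ)| ^ 5) := by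
          rw [hCdef]
          have hM' : M ≤ max M B' := le_max_left _ _
          have hB'' : B' ≤ max M B' := le_max_right _ _
          have hk5 : (0:ℝ) ≤ |(k : ℝ)| ^ 5 := by positivity
          nlinarith
  -- pointwise limits
  have hlim : ∀ k : ℤ, Tendsto (fun τ : ℝ => τ ^ 5 * γ (2 * τ - (k : ℝ)))
      (cocompact ℝ) (nhds (L / 32)) := by
    intro k
    have h1 := cocompact_affine (k : ℝ)
    have hinv : Tendsto (fun τ : ℝ => (2 * τ - (k : ℝ))⁻¹) (cocompact ℝ) (nhds 0) := by
      have := tendsto_inv₀_cobounded (α := ℝ)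
      rw [Metric.cobounded_eq_cocompact] at this
      exact this.comp h1
    have hr : Tendsto (fun τ : ℝ =>
        (1 / 2 + ((k : ℝ) / 2) * (2 * τ - (k : ℝ))⁻¹) ^ 5
          * ((2 * τ - (k : ℝ)) ^ 5 * γ (2 * τ - (k : ℝ))))
        (cocompact ℝ) (nhds ((1 / 2 + ((k : ℝ) / 2) * 0) ^ 5 * L)) := by
      exact (((tendsto_const_nhds.add (tendsto_const_nhds.mul hinv)).pow 5).mul
        (hγL.comp h1))
    have hval : (1 / 2 + ((k : ℝ) / 2) * 0) ^ 5 * L = L / 32 := by norm_num; ring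
    rw [hval] at hr
    have hne : ∀ᶠ τ : ℝ in cocompact ℝ, 2 * τ - (k : ℝ) ≠ 0 := by
      have h0 : ∀ᶠ u : ℝ in cocompact ℝ, u ≠ 0 :=
        Filter.mem_cocompact.mpr ⟨{0}, isCompact_singleton,
          fun x hx => by simpa using hx⟩
      exact h1.eventually h0
    refine hr.congr' ?_
    filter_upwards [hne] with τ hτ
    set u : ℝ := 2 * τ - (k : ℝ) with hudef
    have key : (1 / 2 + ((k : ℝ) / 2) * u⁻¹) * u = τ := by
      field_simp
      ring
    calc (1 / 2 + ((k : ℝ) / 2) * u⁻¹) ^ 5 * (u ^ 5 * γ u)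
        = ((1 / 2 + ((k : ℝ) / 2) * u⁻¹) * u) ^ 5 * γ u := by ring
      _ = τ ^ 5 * γ u := by rw [key]
  -- dominated convergence for the sum
  have hmain : Tendsto (fun τ : ℝ => ∑' k : ℤ, g k * (τ ^ 5 * γ (2 * τ - (k : ℝ))))
      (cocompact ℝ) (nhds (∑' k : ℤ, g k * (L / 32))) := by
    apply tendsto_tsum_of_dominated_convergence
      (bound := fun k : ℤ => C * ((1 + |(k : ℝ)| ^ 5) * |g k|))
    · exact hg.mul_left C
    · exact fun k => (hlim k).const_mul (g k)
    · filter_upwards with τ k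
      calc ‖g k * (τ ^ 5 * γ (2 * τ - (k : ℝ)))‖
          = |g k| * |τ ^ 5 * γ (2 * τ - (k : ℝ))| := by
            rw [Real.norm_eq_abs, abs_mul]
        _ ≤ |g k| * (C * (1 + |(k : ℝ)| ^ 5)) :=
            mul_le_mul_of_nonneg_left (hbound τ k) (abs_nonneg _)
        _ = C * ((1 + |(k : ℝ)| ^ 5) * |g k|) := by ring
  have htsum : (∑' k : ℤ, g k * (L / 32)) = (L / 32) * ∑' k : ℤ, g k := by
    rw [tsum_mul_right, mul_comm]
  rw [htsum] at hmain
  refine hmain.congr fun τ => ?_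
  rw [hF τ, ← tsum_mul_left]
  exact tsum_congr fun k => by ring
end

section
/- Let ε ∈ (0,1], let W : [0,1] → ℝ be continuous with W²((1+θ)/2) + W²((1−θ)/2) = 1 for all θ ∈ [0,1], and define I_ε(x) = 2ε ∫₀¹ W²((1+θ)/2) sin(πεxθ) dθ. Then for all x ∈ ℝ, (1−ε) sinc(π(1−ε)x) + ε ∫_{−1}^{1} W²((1+θ)/2) cos(π(εθ+1)x) dθ = sinc(πx) − sin(πx) I_ε(x), where sinc(u) = sin(u)/u and sinc(0) = 1. -/
open Real

lemma int_cos_mul {c : ℝ} (hc : c ≠ 0) :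
    ∫ θ in (0:ℝ)..1, Real.cos (c * θ) = Real.sin c / c := by
  rw [intervalIntegral.integral_comp_mul_left Real.cos hc]
  simp [integral_cos, div_eq_inv_mul]

lemma int_sin_mul {c : ℝ} (hc : c ≠ 0) :
    ∫ θ in (0:ℝ)..1, Real.sin (c * θ) = (1 - Real.cos c) / c := by
  rw [intervalIntegral.integral_comp_mul_left Real.sin hc]
  simp [integral_sin, div_eq_inv_mul]

/-- Meyer scaling-function cross-correlation identity: if the taper `W`
satisfies `W²((1+θ)/2) + W²((1−θ)/2) = 1` on `[0,1]` and
`I_ε(x) = 2ε∫₀¹ W²((1+θ)/2) sin(πεxθ) dθ`, then for all `x`,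
`(1−ε)sinc(π(1−ε)x) + ε∫_{−1}^{1} W²((1+θ)/2) cos(π(εθ+1)x) dθ
  = sinc(πx) − sin(πx) I_ε(x)`. -/
theorem meyer_scaling_crosscorr_identity
    (ε : ℝ) (hε : 0 < ε) (hε1 : ε ≤ 1)
    (W : ℝ → ℝ) (hWc : ContinuousOn W (Set.Icc 0 1))
    (hW : ∀ θ ∈ Set.Icc (0 : ℝ) 1, W ((1 + θ) / 2) ^ 2 + W ((1 - θ) / 2) ^ 2 = 1)
    (Iε : ℝ → ℝ)
    (hIε : ∀ x : ℝ, Iε x = 2 * ε * ∫ θ in (0 : ℝ)..1,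
      W ((1 + θ) / 2) ^ 2 * Real.sin (π * ε * x * θ)) :
    ∀ x : ℝ,
      (1 - ε) * _root_.sinc (π * (1 - ε) * x) +
        ε * ∫ θ in (-1 : ℝ)..1, W ((1 + θ) / 2) ^ 2 * Real.cos (π * (ε * θ + 1) * x) =
      _root_.sinc (π * x) - Real.sin (π * x) * Iε x := by
  intro x
  have hπ : π ≠ 0 := Real.pi_ne_zero
  set c : ℝ := π * ε * x with hcdef
  -- continuity of the squared taper on [-1,1]
  have hF : ContinuousOn (fun θ : ℝ => W ((1 + θ) / 2) ^ 2) (Set.Icc (-1 : ℝ) 1) := by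
    apply ContinuousOn.pow
    apply hWc.comp (Continuous.continuousOn (by fun_prop))
    intro θ hθ
    exact ⟨by linarith [hθ.1], by linarith [hθ.2]⟩
  have hint : ∀ (a b : ℝ), Set.uIcc a b ⊆ Set.Icc (-1 : ℝ) 1 → ∀ (h : ℝ → ℝ), Continuous h →
      IntervalIntegrable (fun θ => W ((1 + θ) / 2) ^ 2 * h θ) MeasureTheory.volume a b := by
    intro a b hab h hh
    exact (((hF.mono hab)).mul hh.continuousOn).intervalIntegrable
  have hsub01 : Set.uIcc (0:ℝ) 1 ⊆ Set.Icc (-1:ℝ) 1 := by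
    rw [Set.uIcc_of_le (by norm_num : (0:ℝ) ≤ 1)]
    exact Set.Icc_subset_Icc (by norm_num) le_rfl
  have hsubneg : Set.uIcc (-1:ℝ) 0 ⊆ Set.Icc (-1:ℝ) 1 := by
    rw [Set.uIcc_of_le (by norm_num : (-1:ℝ) ≤ 0)]
    exact Set.Icc_subset_Icc le_rfl (by norm_num)
  -- integrability of negated-argument version on [0,1]
  have hFneg : ContinuousOn (fun θ : ℝ => W ((1 + -θ) / 2) ^ 2) (Set.Icc (0 : ℝ) 1) := by
    apply ContinuousOn.pow
    apply hWc.comp (Continuous.continuousOn (by fun_prop))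
    intro θ hθ
    exact ⟨by linarith [hθ.2], by linarith [hθ.1]⟩
  have hintneg : ∀ (h : ℝ → ℝ), Continuous h →
      IntervalIntegrable (fun θ => W ((1 + -θ) / 2) ^ 2 * h θ) MeasureTheory.volume 0 1 := by
    intro h hh
    apply ContinuousOn.intervalIntegrable
    rw [Set.uIcc_of_le (by norm_num : (0:ℝ) ≤ 1)]
    exact hFneg.mul hh.continuousOn
  -- step 1: split the integral
  have h1 : (∫ θ in (-1:ℝ)..1, W ((1 + θ) / 2) ^ 2 * Real.cos (π * (ε * θ + 1) * x))
      = (∫ θ in (-1:ℝ)..0, W ((1 + θ) / 2) ^ 2 * Real.cos (π * (ε * θ + 1) * x))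
      + (∫ θ in (0:ℝ)..1, W ((1 + θ) / 2) ^ 2 * Real.cos (π * (ε * θ + 1) * x)) :=
    (intervalIntegral.integral_add_adjacent_intervals
      (hint _ _ hsubneg _ (by fun_prop)) (hint _ _ hsub01 _ (by fun_prop))).symm
  -- step 2: reflect the left piece
  have h2 : (∫ θ in (-1:ℝ)..0, W ((1 + θ) / 2) ^ 2 * Real.cos (π * (ε * θ + 1) * x))
      = ∫ θ in (0:ℝ)..1, W ((1 + -θ) / 2) ^ 2 * Real.cos (π * (ε * -θ + 1) * x) := by
    rw [intervalIntegral.integral_comp_neg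
      (fun θ => W ((1 + θ) / 2) ^ 2 * Real.cos (π * (ε * θ + 1) * x))]
    norm_num
  -- step 3: combine the two integrals on [0,1]
  have h3 : (∫ θ in (0:ℝ)..1, W ((1 + -θ) / 2) ^ 2 * Real.cos (π * (ε * -θ + 1) * x))
      + (∫ θ in (0:ℝ)..1, W ((1 + θ) / 2) ^ 2 * Real.cos (π * (ε * θ + 1) * x))
      = ∫ θ in (0:ℝ)..1, (W ((1 + -θ) / 2) ^ 2 * Real.cos (π * (ε * -θ + 1) * x)
          + W ((1 + θ) / 2) ^ 2 * Real.cos (π * (ε * θ + 1) * x)) :=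
    (intervalIntegral.integral_add (hintneg _ (by fun_prop))
      (hint _ _ hsub01 _ (by fun_prop))).symm
  -- step 4: pointwise identity using hW
  have h4 : (∫ θ in (0:ℝ)..1, (W ((1 + -θ) / 2) ^ 2 * Real.cos (π * (ε * -θ + 1) * x)
          + W ((1 + θ) / 2) ^ 2 * Real.cos (π * (ε * θ + 1) * x)))
      = ∫ θ in (0:ℝ)..1, (Real.cos (π * x) * Real.cos (c * θ)
          + Real.sin (π * x) * (Real.sin (c * θ)
            - 2 * (W ((1 + θ) / 2) ^ 2 * Real.sin (c * θ)))) := by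
    apply intervalIntegral.integral_congr
    intro θ hθ
    rw [Set.uIcc_of_le (by norm_num : (0:ℝ) ≤ 1)] at hθ
    have hw := hW θ hθ
    have e1 : π * (ε * θ + 1) * x = c * θ + π * x := by rw [hcdef]; ring
    have e2 : π * (ε * -θ + 1) * x = π * x - c * θ := by rw [hcdef]; ring
    have e3 : (1 + -θ) / 2 = (1 - θ) / 2 := by ring
    simp only [e1, e2, e3, Real.cos_add, Real.cos_sub]
    linear_combination (Real.cos (π * x) * Real.cos (c * θ) + Real.sin (π * x) * Real.sin (c * θ)) * hw
  -- step 5: split linearity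
  have hcos_int : IntervalIntegrable (fun θ : ℝ => Real.cos (c * θ)) MeasureTheory.volume 0 1 :=
    (Continuous.intervalIntegrable (by fun_prop)) 0 1
  have hsin_int : IntervalIntegrable (fun θ : ℝ => Real.sin (c * θ)) MeasureTheory.volume 0 1 :=
    (Continuous.intervalIntegrable (by fun_prop)) 0 1
  have hfs_int : IntervalIntegrable
      (fun θ : ℝ => W ((1 + θ) / 2) ^ 2 * Real.sin (c * θ)) MeasureTheory.volume 0 1 :=
    hint _ _ hsub01 _ (by fun_prop)
  have h5 : (∫ θ in (0:ℝ)..1, (Real.cos (π * x) * Real.cos (c * θ)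
          + Real.sin (π * x) * (Real.sin (c * θ)
            - 2 * (W ((1 + θ) / 2) ^ 2 * Real.sin (c * θ)))))
      = Real.cos (π * x) * (∫ θ in (0:ℝ)..1, Real.cos (c * θ))
        + Real.sin (π * x) * ((∫ θ in (0:ℝ)..1, Real.sin (c * θ))
          - 2 * ∫ θ in (0:ℝ)..1, W ((1 + θ) / 2) ^ 2 * Real.sin (c * θ)) := by
    rw [intervalIntegral.integral_add (hcos_int.const_mul _)
      (((hsin_int.sub ((hfs_int.const_mul 2))).const_mul _)),
      intervalIntegral.integral_const_mul, intervalIntegral.integral_const_mul,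
      intervalIntegral.integral_sub hsin_int (hfs_int.const_mul 2),
      intervalIntegral.integral_const_mul]
  -- Iε in terms of c
  have hIc : Iε x = 2 * ε * ∫ θ in (0:ℝ)..1, W ((1 + θ) / 2) ^ 2 * Real.sin (c * θ) := by
    rw [hIε x, hcdef]
  -- put together: the integral part
  have hJ : ε * (∫ θ in (-1:ℝ)..1, W ((1 + θ) / 2) ^ 2 * Real.cos (π * (ε * θ + 1) * x))
      = Real.cos (π * x) * (ε * ∫ θ in (0:ℝ)..1, Real.cos (c * θ))
        + Real.sin (π * x) * (ε * ∫ θ in (0:ℝ)..1, Real.sin (c * θ))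
        - Real.sin (π * x) * Iε x := by
    rw [h1, h2, h3, h4, h5, hIc]; ring
  rw [hJ]
  -- now case on x = 0
  by_cases hx : x = 0
  · subst hx
    simp [_root_.sinc, hcdef]
  · have hc0 : c ≠ 0 := by
      rw [hcdef]
      exact mul_ne_zero (mul_ne_zero hπ (ne_of_gt hε)) hx
    have hπx : π * x ≠ 0 := mul_ne_zero hπ hx
    rw [int_cos_mul hc0, int_sin_mul hc0]
    have hecos : ε * (Real.sin c / c) = Real.sin c / (π * x) := by
      rw [hcdef]; field_simp
    have hesin : ε * ((1 - Real.cos c) / c) = (1 - Real.cos c) / (π * x) := by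
      rw [hcdef]; field_simp
    rw [hecos, hesin]
    have hsinc1 : (1 - ε) * _root_.sinc (π * (1 - ε) * x) * (π * x) = Real.sin (π * (1 - ε) * x) := by
      by_cases he1 : ε = 1
      · subst he1; simp [_root_.sinc]
      · have : π * (1 - ε) * x ≠ 0 :=
          mul_ne_zero (mul_ne_zero hπ (sub_ne_zero.mpr (Ne.symm he1))) hx
        rw [_root_.sinc, if_neg this]
        field_simp
    have hsinadd : Real.sin (π * (1 - ε) * x) = Real.sin (π * x) * Real.cos c
        - Real.cos (π * x) * Real.sin c := by
      rw [show π * (1 - ε) * x = π * x - c by rw [hcdef]; ring, Real.sin_sub]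
    have hs : _root_.sinc (π * x) = Real.sin (π * x) / (π * x) := by rw [_root_.sinc, if_neg hπx]
    have h6 : (1 - ε) * _root_.sinc (π * (1 - ε) * x) = Real.sin (π * (1 - ε) * x) / (π * x) := by
      rw [eq_div_iff hπx]; exact hsinc1
    rw [hs, h6, hsinadd]
    field_simp
    ring
end
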